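/- Let E and F be vector lattices with F Dedekind complete, s ≥ 2. The set of orthosymmetric s-linear maps of order bounded variation from E^s to F is a band in the vector lattice of all s-linear maps of order bounded variation from E^s to F. -/

import Mathlib

open scoped BigOperators

/-- `l` is a (finite positive) partition of `x`. -/
def IsPartition {E : Type*} [AddCommMonoid E] [PartialOrder E] (x : E) (l : List E) : Prop :=
  (∀ a ∈ l, 0 ≤ a) ∧ l.sum = x

/-- The partition sum `Σ_{k₁,...,k_s} |T(a₁ₖ₁, ..., a_sₖ_s)|`. -/
noncomputable def mlPartSum {E F : Type*} [AddCommGroup E] [Lattice E] [Module ℝ E]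
    [AddCommGroup F] [Lattice F] [Module ℝ F] {s : ℕ}
    (T : MultilinearMap ℝ (fun _ : Fin s => E) F) (a : Fin s → List E) : F :=
  ∑ k : (∀ i : Fin s, Fin (a i).length), |T (fun i => (a i).get (k i))|

/-- The set of all partition sums of `T` at the positive tuple `x`. -/
def mlSums {E F : Type*} [AddCommGroup E] [Lattice E] [Module ℝ E]
    [AddCommGroup F] [Lattice F] [Module ℝ F] {s : ℕ}
    (T : MultilinearMap ℝ (fun _ : Fin s => E) F) (x : Fin s → E) : Set F :=
  { y | ∃ a : Fin s → List E, (∀ i, IsPartition (x i) (a i)) ∧ y = mlPartSum T a }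

/-- `T` is of order bounded variation. -/
def MlOBV {E F : Type*} [AddCommGroup E] [Lattice E] [Module ℝ E]
    [AddCommGroup F] [Lattice F] [Module ℝ F] {s : ℕ}
    (T : MultilinearMap ℝ (fun _ : Fin s => E) F) : Prop :=
  ∀ x : Fin s → E, (∀ i, 0 ≤ x i) → BddAbove (mlSums T x)

/-- `T` is orthosymmetric. -/
def MlOrthosym {E F : Type*} [AddCommGroup E] [Lattice E] [Module ℝ E]
    [AddCommGroup F] [Lattice F] [Module ℝ F] {s : ℕ}
    (T : MultilinearMap ℝ (fun _ : Fin s => E) F) : Prop :=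
  ∀ v : Fin s → E, (∃ i j, i ≠ j ∧ |v i| ⊓ |v j| = 0) → T v = 0

/-! Splitting every argument into its positive and negative parts writes `T v` as a signed sum
of values `T p` at positive tuples with `p k ≤ |v k|`, so orthosymmetry only has to be checked at
positive tuples `u` with `u i ⊓ u j = 0`. There every partition sum of an orthosymmetric `T`
vanishes, whence `|S u| ≤ sup (partition sums of S) ≤ sup (partition sums of T) = 0`; and the
supremum of the zeros `Tn n u` is zero. -/

theorem inf_eq_zero_of_le_of_le {α : Type*} [Lattice α] [Zero α] {a b a' b' : α} (ha : 0 ≤ a)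
    (hb : 0 ≤ b) (haa' : a ≤ a') (hbb' : b ≤ b') (h : a' ⊓ b' = 0) : a ⊓ b = 0 :=
  le_antisymm (h ▸ inf_le_inf haa' hbb') (le_inf ha hb)

section IsPartition

variable {M : Type*} [AddCommMonoid M] [PartialOrder M] {x a : M} {l : List M}

theorem IsPartition.nonneg_of_mem (hl : IsPartition x l) (ha : a ∈ l) : 0 ≤ a :=
  hl.1 a ha

theorem IsPartition.le_of_mem [CovariantClass M M (· + ·) (· ≤ ·)] (hl : IsPartition x l)
    (ha : a ∈ l) : a ≤ x := by
  classical
  rw [← hl.2, (List.perm_cons_erase ha).sum_eq, List.sum_cons]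
  exact le_add_of_nonneg_right (List.sum_nonneg fun b hb => hl.1 b (List.mem_of_mem_erase hb))

theorem isPartition_singleton (hx : 0 ≤ x) : IsPartition x [x] :=
  ⟨fun _ ha => List.mem_singleton.mp ha ▸ hx, List.sum_singleton⟩

end IsPartition

theorem IsLUB.eq_zero_of_subset_zero {G : Type*} [AddCommGroup G] [PartialOrder G]
    [CovariantClass G G (· + ·) (· ≤ ·)] {t : Set G} {a : G} (ha : IsLUB t a) (ht : t ⊆ {0}) :
    a = 0 := by
  rcases Set.subset_singleton_iff_eq.mp ht with rfl | rfl
  · have hbot := isLUB_empty_iff.mp ha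
    exact le_antisymm (hbot 0) (le_add_iff_nonneg_right a |>.mp (hbot (a + a)))
  · exact ha.unique isLUB_singleton

section PosNegPart

variable {α : Type*} [AddCommGroup α] [Lattice α] [CovariantClass α α (· + ·) (· ≤ ·)]

theorem posPart_le_abs (a : α) : a⁺ ≤ |a| :=
  sup_le (le_abs_self a) (abs_nonneg a)

theorem negPart_le_abs (a : α) : a⁻ ≤ |a| :=
  sup_le (neg_le_abs a) (abs_nonneg a)

end PosNegPart

theorem MultilinearMap.map_eq_zero_of_abs_inf_abs_eq_zero {R E F : Type*} [CommRing R]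
    [AddCommGroup E] [Lattice E] [CovariantClass E E (· + ·) (· ≤ ·)] [Module R E]
    [AddCommGroup F] [Module R F] {s : ℕ} (T : MultilinearMap R (fun _ : Fin s => E) F)
    {i j : Fin s} (hT : ∀ u : Fin s → E, (∀ k, 0 ≤ u k) → u i ⊓ u j = 0 → T u = 0)
    {v : Fin s → E} (hv : |v i| ⊓ |v j| = 0) : T v = 0 := by
  classical
  let p : Finset (Fin s) → Fin s → E := fun t => t.piecewise (fun k => (v k)⁺) fun k => (v k)⁻
  have hp_nonneg : ∀ t k, 0 ≤ p t k := fun t k => by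
    by_cases hk : k ∈ t <;> simp [p, hk]
  have hp_le : ∀ t k, p t k ≤ |v k| := fun t k => by
    by_cases hk : k ∈ t <;> simp [p, hk, posPart_le_abs, negPart_le_abs]
  have hterm : ∀ t : Finset (Fin s),
      T (t.piecewise (fun k => (v k)⁺) fun k => -(v k)⁻) = 0 := fun t => by
    have hsign : (t.piecewise (fun k => (v k)⁺) fun k => -(v k)⁻)
        = fun k => (if k ∈ t then (1 : R) else -1) • p t k := by
      funext k
      by_cases hk : k ∈ t <;> simp [p, hk]
    rw [hsign, T.map_smul_univ, hT _ (hp_nonneg t)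
      (inf_eq_zero_of_le_of_le (hp_nonneg t i) (hp_nonneg t j) (hp_le t i) (hp_le t j) hv),
      smul_zero]
  have hv_eq : v = (fun k => (v k)⁺) + fun k => -(v k)⁻ := by
    funext k
    simp [← sub_eq_add_neg, posPart_sub_negPart]
  rw [hv_eq, T.map_add_univ]
  exact Finset.sum_eq_zero fun t _ => hterm t

section Multilinear

variable {E F : Type*} [AddCommGroup E] [Lattice E] [Module ℝ E] [AddCommGroup F] [Lattice F]
  [Module ℝ F] {s : ℕ}

theorem mlPartSum_singleton (T : MultilinearMap ℝ (fun _ : Fin s => E) F) (u : Fin s → E) :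
    mlPartSum T (fun i => [u i]) = |T u| := by
  have : ∀ i, Unique (Fin ([u i] : List E).length) := fun _ => inferInstanceAs (Unique (Fin 1))
  rw [mlPartSum, Fintype.sum_unique]
  congr
  simp

theorem abs_mem_mlSums (T : MultilinearMap ℝ (fun _ : Fin s => E) F) {u : Fin s → E}
    (hu : ∀ i, 0 ≤ u i) : |T u| ∈ mlSums T u :=
  ⟨fun i => [u i], fun i => isPartition_singleton (hu i), (mlPartSum_singleton T u).symm⟩

variable [CovariantClass E E (· + ·) (· ≤ ·)]

theorem mlOrthosym_of_nonneg {T : MultilinearMap ℝ (fun _ : Fin s => E) F}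
    (hT : ∀ u : Fin s → E, (∀ k, 0 ≤ u k) → ∀ i j, i ≠ j → u i ⊓ u j = 0 → T u = 0) :
    MlOrthosym T := by
  rintro v ⟨i, j, hij, hv⟩
  exact T.map_eq_zero_of_abs_inf_abs_eq_zero (fun u hu => hT u hu i j hij) hv

namespace MlOrthosym

variable {T : MultilinearMap ℝ (fun _ : Fin s => E) F}

theorem map_eq_zero_of_nonneg (hT : MlOrthosym T) {u : Fin s → E} (hu : ∀ k, 0 ≤ u k) {i j : Fin s}
    (hij : i ≠ j) (huij : u i ⊓ u j = 0) : T u = 0 :=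
  hT u ⟨i, j, hij, by rwa [abs_of_nonneg (hu i), abs_of_nonneg (hu j)]⟩

theorem mlSums_eq_zero (hT : MlOrthosym T) {u : Fin s → E} (hu : ∀ k, 0 ≤ u k) {i j : Fin s}
    (hij : i ≠ j) (huij : u i ⊓ u j = 0) : mlSums T u = {0} := by
  refine Set.eq_singleton_iff_unique_mem.mpr ⟨?_, ?_⟩
  · simpa [hT.map_eq_zero_of_nonneg hu hij huij, abs] using abs_mem_mlSums T hu
  · rintro _ ⟨a, ha, rfl⟩
    refine Finset.sum_eq_zero fun k _ => ?_
    have hmem : ∀ l, (a l).get (k l) ∈ a l := fun l => List.get_mem _ _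
    rw [hT.map_eq_zero_of_nonneg (fun l => (ha l).nonneg_of_mem (hmem l)) hij
      (inf_eq_zero_of_le_of_le ((ha i).nonneg_of_mem (hmem i)) ((ha j).nonneg_of_mem (hmem j))
        ((ha i).le_of_mem (hmem i)) ((ha j).le_of_mem (hmem j)) huij)]
    simp [abs]

end MlOrthosym

end Multilinear

theorem stmt13_general {E F : Type*} [AddCommGroup E] [Lattice E]
    [CovariantClass E E (· + ·) (· ≤ ·)] [Module ℝ E]
    [AddCommGroup F] [ConditionallyCompleteLattice F]
    [CovariantClass F F (· + ·) (· ≤ ·)] [Module ℝ F]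
    (s : ℕ) :
    (∀ S T : MultilinearMap ℝ (fun _ : Fin s => E) F, MlOBV S → MlOBV T →
      MlOrthosym T →
      (∀ x : Fin s → E, (∀ i, 0 ≤ x i) → sSup (mlSums S x) ≤ sSup (mlSums T x)) →
      MlOrthosym S) ∧
    (∀ (ι : Type) [Preorder ι],
      ∀ (Tn : ι → MultilinearMap ℝ (fun _ : Fin s => E) F)
        (T : MultilinearMap ℝ (fun _ : Fin s => E) F),
      (∀ n, MlOBV (Tn n)) → (∀ n, MlOrthosym (Tn n)) → MlOBV T →
      (∀ m n, m ≤ n → ∀ x : Fin s → E, (∀ i, 0 ≤ x i) → Tn m x ≤ Tn n x) →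
      (∀ x : Fin s → E, (∀ i, 0 ≤ x i) →
        IsLUB (Set.range fun n => Tn n x) (T x)) →
      MlOrthosym T) := by
  refine ⟨fun S T hS _ hT hST => ?_, fun ι _ Tn T _ hTn _ _ hlub => ?_⟩
  · refine mlOrthosym_of_nonneg fun u hu i j hij huij => ?_
    have habs : |S u| ≤ 0 := calc
      |S u| ≤ sSup (mlSums S u) := le_csSup (hS u hu) (abs_mem_mlSums S hu)
      _ ≤ sSup (mlSums T u) := hST u hu
      _ = 0 := by rw [hT.mlSums_eq_zero hu hij huij, csSup_singleton]
    exact le_antisymm ((le_abs_self _).trans habs) (neg_nonpos.mp ((neg_le_abs _).trans habs))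
  · refine mlOrthosym_of_nonneg fun u hu i j hij huij => (hlub u hu).eq_zero_of_subset_zero ?_
    rintro _ ⟨n, rfl⟩
    exact (hTn n).map_eq_zero_of_nonneg hu hij huij

/-- The orthosymmetric s-linear maps of order bounded variation form a band (an
order-closed ideal) in the vector lattice of s-linear maps of order bounded variation:
(i) they form an ideal (any `S` whose modulus is dominated by the modulus of an
orthosymmetric map is orthosymmetric), and (ii) they are closed under suprema of
increasing nets. -/
theorem stmt13 {E F : Type*} [AddCommGroup E] [Lattice E]
    [CovariantClass E E (· + ·) (· ≤ ·)] [Module ℝ E]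
    [AddCommGroup F] [ConditionallyCompleteLattice F]
    [CovariantClass F F (· + ·) (· ≤ ·)] [Module ℝ F]
    (s : ℕ) (hs : 2 ≤ s) :
    (∀ S T : MultilinearMap ℝ (fun _ : Fin s => E) F, MlOBV S → MlOBV T →
      MlOrthosym T →
      (∀ x : Fin s → E, (∀ i, 0 ≤ x i) → sSup (mlSums S x) ≤ sSup (mlSums T x)) →
      MlOrthosym S) ∧
    (∀ (ι : Type) [Preorder ι],
      ∀ (Tn : ι → MultilinearMap ℝ (fun _ : Fin s => E) F)
        (T : MultilinearMap ℝ (fun _ : Fin s => E) F),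
      (∀ n, MlOBV (Tn n)) → (∀ n, MlOrthosym (Tn n)) → MlOBV T →
      (∀ m n, m ≤ n → ∀ x : Fin s → E, (∀ i, 0 ≤ x i) → Tn m x ≤ Tn n x) →
      (∀ x : Fin s → E, (∀ i, 0 ≤ x i) →
        IsLUB (Set.range fun n => Tn n x) (T x)) →
      MlOrthosym T) :=
  stmt13_general s
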